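/- For all a, b ∈ {1,2,3}, the matrix identity P_a · Had^{⊗4} · P_b = M[a,b] · v_a v_b† holds in the 16×16 complex matrices, where Had^{⊗4} is the fourfold Kronecker power of the Hadamard matrix and v_a v_b† is the outer product of v_a and v_b. -/

import Mathlib

/-!
`P_a` is the diagonal matrix `diag v_a` with 0/1 entries, so `P_a · H · P_b` keeps exactly the
entries of `H = Had^{⊗4}` on `S_a × S_b`. There `H_{s,t} = (1/4)(-1)^{s·t}`, and the parity of
`s·t` turns out to depend only on the pattern classes `a, b`: it is the sign pattern of `4M`.
-/

open Matrix

/-- The pattern sets `S₁ = {0000, 1111}`, `S₂ = {0011, 1100}`, `S₃ = {0110, 1001}`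
(indexed here by `Fin 3`). -/
def patS : Fin 3 → Finset (Fin 4 → Fin 2)
  | 0 => {![0, 0, 0, 0], ![1, 1, 1, 1]}
  | 1 => {![0, 0, 1, 1], ![1, 1, 0, 0]}
  | 2 => {![0, 1, 1, 0], ![1, 0, 0, 1]}

/-- The standard basis vector `|s⟩` of `ℂ^{16} ≅ (ℂ²)^{⊗4}`, basis indexed by
bit-strings `s ∈ {0,1}⁴`. -/
def ket (s : Fin 4 → Fin 2) : (Fin 4 → Fin 2) → ℂ := fun t => if t = s then 1 else 0

/-- `v_a = Σ_{s ∈ S_a} |s⟩`. -/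
noncomputable def vvec (a : Fin 3) : (Fin 4 → Fin 2) → ℂ := ∑ s ∈ patS a, ket s

/-- `P_a = Σ_{s ∈ S_a} |s⟩⟨s|`, the orthogonal projection onto `span{|s⟩ : s ∈ S_a}`. -/
noncomputable def Pproj (a : Fin 3) : Matrix (Fin 4 → Fin 2) (Fin 4 → Fin 2) ℂ :=
  ∑ s ∈ patS a, Matrix.vecMulVec (ket s) (ket s)

/-- The fourfold Kronecker power `Had^{⊗4}` of the Hadamard matrix
`(1/√2)·[[1,1],[1,−1]]`, as a 16×16 matrix indexed by bit-strings:
`(Had^{⊗4})_{s,t} = ∏_{i=1}^4 Had_{sᵢ,tᵢ}`. -/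
noncomputable def HadPow4 : Matrix (Fin 4 → Fin 2) (Fin 4 → Fin 2) ℂ :=
  fun s t => ∏ i : Fin 4, (((1 / Real.sqrt 2 : ℝ) : ℂ) • !![(1 : ℂ), 1; 1, -1]) (s i) (t i)

/-- The 3×3 matrix `M = (1/4)·[[1,1,1],[1,1,−1],[1,−1,1]]`. -/
noncomputable def Mmat : Matrix (Fin 3) (Fin 3) ℝ := (1 / 4 : ℝ) • !![1, 1, 1; 1, 1, -1; 1, -1, 1]

theorem Matrix.diagonal_mul_mul_diagonal_eq_smul_vecMulVec {n R : Type*} [Fintype n]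
    [DecidableEq n] [CommSemiring R] {d e : n → R} {A : Matrix n n R} (c : R)
    (hA : ∀ s t, d s ≠ 0 → e t ≠ 0 → A s t = c) :
    diagonal d * A * diagonal e = c • vecMulVec d e := by
  ext s t
  rw [mul_diagonal, diagonal_mul, smul_apply, vecMulVec_apply, smul_eq_mul]
  by_cases hs : d s = 0
  · simp [hs]
  by_cases ht : e t = 0
  · simp [ht]
  rw [hA s t hs ht]
  ring

lemma vecMulVec_ket_self (s : Fin 4 → Fin 2) : vecMulVec (ket s) (ket s) = diagonal (ket s) := by
  ext t u
  simp only [vecMulVec_apply, diagonal_apply, ket]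
  split_ifs <;> simp_all

lemma Pproj_eq_diagonal (a : Fin 3) : Pproj a = diagonal (vvec a) := by
  simp only [Pproj, vvec, vecMulVec_ket_self]
  exact (map_sum (diagonalAddMonoidHom _ ℂ) _ _).symm

lemma star_ket (s : Fin 4 → Fin 2) : star (ket s) = ket s := by
  ext t
  by_cases h : t = s <;> simp [ket, h]

lemma star_vvec (a : Fin 3) : star (vvec a) = vvec a := by
  simp only [vvec, star_sum, star_ket]

lemma vvec_ne_zero_iff (a : Fin 3) (s : Fin 4 → Fin 2) : vvec a s ≠ 0 ↔ s ∈ patS a := by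
  simp [vvec, ket, Finset.sum_apply]

def bitDot {n : ℕ} (s t : Fin n → Fin 2) : ℕ := ∑ i, (s i).val * (t i).val

lemma unnormalizedHadamard_apply (i j : Fin 2) :
    !![(1 : ℂ), 1; 1, -1] i j = (-1) ^ (i.val * j.val) := by
  fin_cases i <;> fin_cases j <;> simp

lemma HadPow4_apply (s t : Fin 4 → Fin 2) : HadPow4 s t = (1 / 4 : ℂ) * (-1) ^ bitDot s t := by
  have hsqrt : ((1 / Real.sqrt 2 : ℝ) : ℂ) ^ 4 = 1 / 4 := by
    rw [← Complex.ofReal_pow, div_pow, one_pow, show 4 = 2 * 2 from rfl, pow_mul,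
      Real.sq_sqrt zero_le_two]
    norm_num
  simp only [HadPow4, Matrix.smul_apply, unnormalizedHadamard_apply, smul_eq_mul,
    Finset.prod_mul_distrib, Finset.prod_const, Finset.card_univ, Fintype.card_fin,
    Finset.prod_pow_eq_pow_sum, bitDot, hsqrt]

def signMat : Matrix (Fin 3) (Fin 3) ℤ := !![1, 1, 1; 1, 1, -1; 1, -1, 1]

lemma neg_one_pow_bitDot_of_mem :
    ∀ a b, ∀ s ∈ patS a, ∀ t ∈ patS b, (-1 : ℤ) ^ bitDot s t = signMat a b := by
  decide

lemma Mmat_eq (a b : Fin 3) : Mmat a b = (1 / 4 : ℝ) * signMat a b := by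
  fin_cases a <;> fin_cases b <;> simp [Mmat, signMat]

lemma HadPow4_apply_of_mem {a b : Fin 3} {s t : Fin 4 → Fin 2} (hs : s ∈ patS a)
    (ht : t ∈ patS b) : HadPow4 s t = ((Mmat a b : ℝ) : ℂ) := by
  have hsign : (-1 : ℂ) ^ bitDot s t = (signMat a b : ℂ) := by
    exact_mod_cast neg_one_pow_bitDot_of_mem a b s hs t ht
  rw [HadPow4_apply, Mmat_eq, hsign]
  push_cast
  ring

/-- `P_a · Had^{⊗4} · P_b = M[a,b] · v_a v_b†` in the 16×16 complex matrices. -/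
theorem stmt3 (a b : Fin 3) :
    Pproj a * HadPow4 * Pproj b
      = ((Mmat a b : ℝ) : ℂ) • Matrix.vecMulVec (vvec a) (star (vvec b)) := by
  rw [Pproj_eq_diagonal, Pproj_eq_diagonal, star_vvec]
  refine diagonal_mul_mul_diagonal_eq_smul_vecMulVec _ fun s t hs ht => ?_
  exact HadPow4_apply_of_mem ((vvec_ne_zero_iff a s).1 hs) ((vvec_ne_zero_iff b t).1 ht)
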